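/- Let n ≥ 3, let H = {0} ∪ {m ∈ ℕ : m ≥ n} (the numerical semigroup generated by n, n+1, …, 2n−1), let k be a field, and set R = k[[H]] with maximal ideal 𝔪_R = {g ∈ R : the constant coefficient of g is 0}. Then: (i) the conductor {r ∈ R : r·k[[t]] ⊆ R} equals 𝔪_R; (ii) tr(ω_H) = 𝔪_R, where tr(ω_H) = {∑ᵢ fᵢ(mᵢ) : fᵢ ∈ Hom_R(ω_H, R), mᵢ ∈ ω_H} ⊆ R; and (iii) b(ω_H) = 𝔪_R, where b(ω_H) = {r ∈ R : r·x ∈ R for every x ∈ k((t)) with x·ω_Hⁿ ⊆ ω_Hⁿ for some n}. -/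

import Mathlib

set_option synthInstance.maxHeartbeats 400000
set_option maxHeartbeats 1000000

/-- The Frobenius number of a numerical semigroup `H ⊆ ℕ`: the largest natural number
not in `H` (meaningful when `H ≠ ℕ` and the complement of `H` is finite). -/
noncomputable def frobeniusNumber (H : AddSubmonoid ℕ) : ℕ :=
  sSup {x : ℕ | x ∉ H}

/-- The set of quasi-Frobenius numbers of a numerical semigroup `H`:
`QF(H) = {x ∈ ℕ \ H : x + h ∈ H for every nonzero h ∈ H}`. -/
def QF (H : AddSubmonoid ℕ) : Set ℕ :=
  {x | x ∉ H ∧ ∀ h ∈ H, h ≠ 0 → x + h ∈ H}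

/-- The semigroup power series ring `k[[H]]`: the subalgebra of `k[[t]]` of power series
whose `i`-th coefficient vanishes for all `i ∉ H`. -/
noncomputable def semigroupAlgebra (k : Type*) [Field k] (H : AddSubmonoid ℕ) :
    Subalgebra k (PowerSeries k) where
  carrier := {g | ∀ i : ℕ, i ∉ H → PowerSeries.coeff i g = 0}
  mul_mem' := by
    intro a b ha hb i hi
    rw [PowerSeries.coeff_mul]
    refine Finset.sum_eq_zero ?_
    rintro ⟨p, q⟩ hpq
    replace hpq : p + q = i := Finset.HasAntidiagonal.mem_antidiagonal.mp hpq
    by_cases hp : p ∈ H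
    · by_cases hq : q ∈ H
      · exact absurd (hpq ▸ H.add_mem hp hq) hi
      · rw [hb q hq, mul_zero]
    · rw [ha p hp, zero_mul]
  one_mem' := by
    intro i hi
    have h0 : i ≠ 0 := fun h => hi (h ▸ H.zero_mem)
    rw [PowerSeries.coeff_one, if_neg h0]
  add_mem' := by
    intro a b ha hb i hi
    rw [map_add, ha i hi, hb i hi, add_zero]
  zero_mem' := by
    intro i hi
    rw [map_zero]
  algebraMap_mem' := by
    intro r i hi
    have h0 : i ≠ 0 := fun h => hi (h ▸ H.zero_mem)
    simp only [PowerSeries.algebraMap_apply, PowerSeries.coeff_C, if_neg h0]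

/-- The canonical module `ω_H` of `k[[H]]`: the `k[[H]]`-submodule of `k[[t]]`
generated by the monomials `t^(f(H) - x)` for `x ∈ QF(H)`. -/
noncomputable def canonicalModule (k : Type*) [Field k] (H : AddSubmonoid ℕ) :
    Submodule ↥(semigroupAlgebra k H) (PowerSeries k) :=
  Submodule.span ↥(semigroupAlgebra k H)
    ((fun x => (PowerSeries.X : PowerSeries k) ^ (frobeniusNumber H - x)) '' QF H)


/-- The trace ideal of a module: the ideal generated by all values `f m`
for `f : M →ₗ[R] R` and `m : M`. -/
def traceIdeal (R : Type*) [CommRing R] (M : Type*) [AddCommGroup M] [Module R M] :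
    Ideal R :=
  ⨆ f : M →ₗ[R] R, LinearMap.range f

/-- The numerical semigroup `H = {0} ∪ {m ∈ ℕ : m ≥ n}`, i.e. the semigroup generated
by `n, n+1, …, 2n-1`. -/
def nSemigroup (n : ℕ) : AddSubmonoid ℕ where
  carrier := {m : ℕ | m = 0 ∨ n ≤ m}
  zero_mem' := Or.inl rfl
  add_mem' := by
    rintro a b (ha | ha) (hb | hb) <;> [left; right; right; right] <;> omega

/-- The ideal `𝔪_R = {g ∈ k[[H]] : the constant coefficient of g is 0}` of `k[[H]]`. -/
noncomputable def maximalIdealOf (k : Type*) [Field k] (H : AddSubmonoid ℕ) :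
    Ideal ↥(semigroupAlgebra k H) where
  carrier := {g | PowerSeries.constantCoeff (g : PowerSeries k) = 0}
  add_mem' := by
    intro a b ha hb
    simp only [Set.mem_setOf_eq] at *
    push_cast
    rw [map_add, ha, hb, add_zero]
  zero_mem' := by
    simp only [Set.mem_setOf_eq]
    push_cast
    rw [map_zero]
  smul_mem' := by
    intro c x hx
    simp only [Set.mem_setOf_eq, smul_eq_mul] at *
    push_cast
    rw [map_mul, hx, mul_zero]

/-- `b(ω_H) = {r ∈ R : r·x ∈ R for every x ∈ k((t)) with x·ω_Hⁿ ⊆ ω_Hⁿ for some n}`,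
a subset of `R = k[[H]]`, computed inside the Laurent series field `k((t))`. -/
noncomputable def bCanonicalSet (k : Type*) [Field k] (H : AddSubmonoid ℕ) :
    Set ↥(semigroupAlgebra k H) :=
  {r | ∀ x : LaurentSeries k,
      (∃ n : ℕ, ∀ y ∈ canonicalModule k H ^ n,
          x * HahnSeries.ofPowerSeries ℤ k y ∈
            (HahnSeries.ofPowerSeries ℤ k) ''
              ((canonicalModule k H ^ n : Submodule ↥(semigroupAlgebra k H)
                (PowerSeries k)) : Set (PowerSeries k))) →
      HahnSeries.ofPowerSeries ℤ k (r : PowerSeries k) * x ∈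
        (HahnSeries.ofPowerSeries ℤ k) '' (semigroupAlgebra k H : Set (PowerSeries k))}


/-! For `H = nSemigroup n` we have `k[[H]] = k + tⁿ k[[t]]`, so `𝔪_R = tⁿ k[[t]]` is the
conductor, and `ω_H` is the space of power series without a `tⁿ⁻¹` term. Since `1, t ∈ ω_H`
(this is where `n ≥ 3` enters), every power series is `u + t v` with `u, v ∈ ω_H`; hence
`ω_H² = k[[t]]` and `𝔪_R = tⁿ ω_H + tⁿ⁺¹ ω_H` lies in the trace. Conversely a homomorphism
`f : ω_H → R` is multiplication by `f 1`, and `t · f 1 = f t ∈ R` forces `f 1 ∈ 𝔪_R`. -/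

open PowerSeries

section Subalgebra

variable {A S : Type*} [CommRing A] [CommRing S] [Algebra A S] {R : Subalgebra A S}

theorem LinearMap.mul_apply_comm_of_mul_mem [IsDomain S] {M : Submodule R S}
    (f : M →ₗ[R] R) {a : S} (ha : a ≠ 0) {x y : M} (hx : a * x ∈ R) (hy : a * y ∈ R) :
    (x : S) * f y = y * f x := by
  have hsmul : (⟨a * x, hx⟩ : R) • y = (⟨a * y, hy⟩ : R) • x :=
    Subtype.ext (show a * x * y = a * y * x by ring)
  have h := congrArg (fun z : R => (z : S)) (congrArg f hsmul)
  rw [map_smul, map_smul] at h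
  simp only [smul_eq_mul, Subalgebra.coe_mul, mul_assoc] at h
  exact mul_left_cancel₀ ha h

def Submodule.mulToSubalgebra (M : Submodule R S) (c : S) (hc : ∀ m ∈ M, c * m ∈ R) :
    M →ₗ[R] R where
  toFun m := ⟨c * m, hc m m.2⟩
  map_add' x y := Subtype.ext (mul_add c x y)
  map_smul' r x := Subtype.ext (mul_left_comm c r x)

theorem mul_mem_traceIdeal (M : Submodule R S) {c : S} (hc : ∀ m ∈ M, c * m ∈ R) {m : S}
    (hm : m ∈ M) : (⟨c * m, hc m hm⟩ : R) ∈ traceIdeal R M :=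
  Submodule.mem_iSup_of_mem (M.mulToSubalgebra c hc) (LinearMap.mem_range_self _ (⟨m, hm⟩ : M))

end Subalgebra

theorem mem_maximalIdealOf {k : Type*} [Field k] {H : AddSubmonoid ℕ}
    {r : semigroupAlgebra k H} : r ∈ maximalIdealOf k H ↔ coeff 0 (r : k⟦X⟧) = 0 := by
  rw [coeff_zero_eq_constantCoeff_apply]
  rfl

namespace nSemigroup

variable {k : Type*} [Field k] {n : ℕ}

theorem mem_semigroupAlgebra {g : k⟦X⟧} :
    g ∈ semigroupAlgebra k (nSemigroup n) ↔ ∀ i, i ≠ 0 → i < n → coeff i g = 0 := by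
  show (∀ i, ¬(i = 0 ∨ n ≤ i) → coeff i g = 0) ↔ _
  simp only [not_or, not_le, and_imp]

theorem X_pow_mul_mem {m : ℕ} (hm : n ≤ m) (g : k⟦X⟧) :
    X ^ m * g ∈ semigroupAlgebra k (nSemigroup n) :=
  mem_semigroupAlgebra.2 fun i _ hi => by rw [coeff_X_pow_mul', if_neg (by omega)]

theorem coeff_mul_of_mem {c : k⟦X⟧} (hc : c ∈ semigroupAlgebra k (nSemigroup n)) {i : ℕ}
    (hi : i < n) (g : k⟦X⟧) : coeff i (c * g) = coeff 0 c * coeff i g := by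
  rw [coeff_mul, Finset.Nat.sum_antidiagonal_eq_sum_range_succ_mk,
    Finset.sum_eq_single_of_mem 0 (by simp), Nat.sub_zero]
  intro j hj hj0
  rw [mem_semigroupAlgebra.1 hc j hj0 (by rw [Finset.mem_range] at hj; omega), zero_mul]

theorem X_pow_dvd_of_mem_maximalIdealOf {r : semigroupAlgebra k (nSemigroup n)}
    (hr : r ∈ maximalIdealOf k (nSemigroup n)) : X ^ n ∣ (r : k⟦X⟧) := by
  refine X_pow_dvd_iff.2 fun i hi => ?_
  rcases Nat.eq_zero_or_pos i with rfl | hi0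
  · exact mem_maximalIdealOf.1 hr
  · exact mem_semigroupAlgebra.1 r.2 i hi0.ne' hi

theorem mul_mem_of_mem_maximalIdealOf {r : semigroupAlgebra k (nSemigroup n)}
    (hr : r ∈ maximalIdealOf k (nSemigroup n)) (g : k⟦X⟧) :
    (r : k⟦X⟧) * g ∈ semigroupAlgebra k (nSemigroup n) := by
  obtain ⟨s, hs⟩ := X_pow_dvd_of_mem_maximalIdealOf hr
  rw [hs, mul_assoc]
  exact X_pow_mul_mem le_rfl _

theorem coeff_zero_eq_zero_of_mul_X_mem (hn : 2 ≤ n) {g : k⟦X⟧}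
    (h : g * X ∈ semigroupAlgebra k (nSemigroup n)) : coeff 0 g = 0 := by
  rw [← coeff_succ_mul_X]
  exact mem_semigroupAlgebra.1 h 1 one_ne_zero (by omega)

theorem conductor_eq_maximalIdealOf (hn : 2 ≤ n) :
    {r : semigroupAlgebra k (nSemigroup n) |
        ∀ g : k⟦X⟧, (r : k⟦X⟧) * g ∈ semigroupAlgebra k (nSemigroup n)}
      = (maximalIdealOf k (nSemigroup n) : Set (semigroupAlgebra k (nSemigroup n))) := by
  ext r
  exact ⟨fun h => mem_maximalIdealOf.2 (coeff_zero_eq_zero_of_mul_X_mem hn (h X)),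
    fun h => mul_mem_of_mem_maximalIdealOf h⟩

theorem notMem_iff {i : ℕ} : i ∉ nSemigroup n ↔ i ∈ Set.Ioo 0 n := by
  show ¬(i = 0 ∨ n ≤ i) ↔ _
  simp only [Set.mem_Ioo]
  omega

theorem frobeniusNumber_eq : frobeniusNumber (nSemigroup n) = n - 1 := by
  have hcompl : {x : ℕ | x ∉ nSemigroup n} = Set.Ioo 0 n := Set.ext fun _ => notMem_iff
  rw [frobeniusNumber, hcompl]
  rcases lt_or_ge n 2 with hn | hn
  · rw [Set.eq_empty_of_forall_notMem fun x (hx : x ∈ Set.Ioo 0 n) => by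
      simp only [Set.mem_Ioo] at hx; omega, csSup_empty]
    exact (Nat.sub_eq_zero_of_le (by omega)).symm
  · exact IsGreatest.csSup_eq ⟨⟨by omega, by omega⟩, fun x hx => by
      simp only [Set.mem_Ioo] at hx; omega⟩

theorem QF_eq : QF (nSemigroup n) = Set.Ioo 0 n := by
  ext x
  refine ⟨fun hx => notMem_iff.1 hx.1, fun hx => ⟨notMem_iff.2 hx, fun h hh hh0 => ?_⟩⟩
  rcases hh with rfl | hh
  · exact absurd rfl hh0
  · exact Or.inr (by omega)

theorem X_pow_mem_canonicalModule {j : ℕ} (hj : j + 2 ≤ n) :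
    (X : k⟦X⟧) ^ j ∈ canonicalModule k (nSemigroup n) := by
  refine Submodule.subset_span ⟨n - 1 - j, ?_, ?_⟩
  · rw [QF_eq, Set.mem_Ioo]
    omega
  · simp only [frobeniusNumber_eq]
    congr 1
    omega

theorem mem_canonicalModule (hn : 2 ≤ n) {g : k⟦X⟧} :
    g ∈ canonicalModule k (nSemigroup n) ↔ coeff (n - 1) g = 0 := by
  constructor
  · let N : Submodule (semigroupAlgebra k (nSemigroup n)) k⟦X⟧ :=
      { carrier := {g | coeff (n - 1) g = 0}
        add_mem' := fun ha hb => by simp_all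
        zero_mem' := by simp
        smul_mem' := fun c g hg => by
          simp_all [Subalgebra.smul_def,
            coeff_mul_of_mem c.2 (by omega : n - 1 < n)] }
    suffices canonicalModule k (nSemigroup n) ≤ N from fun hg => this hg
    refine Submodule.span_le.2 ?_
    rintro _ ⟨x, hx, rfl⟩
    rw [QF_eq, Set.mem_Ioo] at hx
    show coeff (n - 1) (X ^ (frobeniusNumber (nSemigroup n) - x)) = 0
    rw [frobeniusNumber_eq, coeff_X_pow, if_neg (by omega)]
  · intro hg
    set s : k⟦X⟧ := ∑ j ∈ Finset.range (n - 1), C (coeff j g) * X ^ j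
    have hs : s ∈ canonicalModule k (nSemigroup n) := by
      refine Submodule.sum_mem _ fun j hj => ?_
      rw [Finset.mem_range] at hj
      simpa [Algebra.smul_def] using Submodule.smul_mem _
        (algebraMap k (semigroupAlgebra k (nSemigroup n)) (coeff j g))
        (X_pow_mem_canonicalModule (k := k) (by omega : j + 2 ≤ n))
    have hrest : g - s ∈ semigroupAlgebra k (nSemigroup n) := by
      refine mem_semigroupAlgebra.2 fun i _ hi => ?_
      simp only [s, map_sub, map_sum, coeff_C_mul, coeff_X_pow, mul_ite, mul_one, mul_zero,
        Finset.sum_ite_eq, Finset.mem_range]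
      split_ifs with h
      · exact sub_self _
      · rw [show i = n - 1 by omega, hg, sub_zero]
    have := Submodule.smul_mem _ (⟨g - s, hrest⟩ : semigroupAlgebra k (nSemigroup n))
      (X_pow_mem_canonicalModule (k := k) (j := 0) (by omega))
    simpa [Subalgebra.smul_def] using Submodule.add_mem _ hs this

theorem one_mem_canonicalModule (hn : 2 ≤ n) : (1 : k⟦X⟧) ∈ canonicalModule k (nSemigroup n) := by
  simpa using X_pow_mem_canonicalModule (k := k) (j := 0) (by omega)

theorem X_mem_canonicalModule (hn : 3 ≤ n) : (X : k⟦X⟧) ∈ canonicalModule k (nSemigroup n) := by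
  simpa using X_pow_mem_canonicalModule (k := k) (j := 1) (by omega)

/-- Split off the `tⁿ⁻¹` term of `g` as `t · (c tⁿ⁻²)`. -/
theorem exists_eq_add_X_mul (hn : 3 ≤ n) (g : k⟦X⟧) :
    ∃ u ∈ canonicalModule k (nSemigroup n), ∃ v ∈ canonicalModule k (nSemigroup n),
      g = u + X * v := by
  set c := coeff (n - 1) g
  refine ⟨g - C c * X ^ (n - 1), ?_, C c * X ^ (n - 2), ?_, ?_⟩
  · rw [mem_canonicalModule (by omega), map_sub, coeff_C_mul_X_pow, if_pos rfl, sub_self]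
  · rw [mem_canonicalModule (by omega), coeff_C_mul_X_pow, if_neg (by omega)]
  · rw [show n - 1 = n - 2 + 1 by omega]
    ring

theorem traceIdeal_canonicalModule (hn : 3 ≤ n) :
    traceIdeal (semigroupAlgebra k (nSemigroup n)) (canonicalModule k (nSemigroup n))
      = maximalIdealOf k (nSemigroup n) := by
  refine le_antisymm (iSup_le fun f => ?_) fun r hr => ?_
  · rintro _ ⟨x, rfl⟩
    let one : canonicalModule k (nSemigroup n) := ⟨1, one_mem_canonicalModule (by omega : 2 ≤ n)⟩
    have hf : ∀ x, (f x : k⟦X⟧) = x * f one := fun x => by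
      simpa [one] using (f.mul_apply_comm_of_mul_mem (pow_ne_zero n X_ne_zero)
        (X_pow_mul_mem (k := k) le_rfl x) (X_pow_mul_mem (k := k) le_rfl one.1)).symm
    have hf1 : coeff 0 (f one : k⟦X⟧) = 0 := by
      refine coeff_zero_eq_zero_of_mul_X_mem (by omega : 2 ≤ n) ?_
      rw [mul_comm, ← hf ⟨X, X_mem_canonicalModule hn⟩]
      exact (f _).2
    rw [coeff_zero_eq_constantCoeff_apply] at hf1
    rw [mem_maximalIdealOf, hf, coeff_zero_eq_constantCoeff_apply, map_mul, hf1, mul_zero]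
  · obtain ⟨s, hs⟩ := X_pow_dvd_of_mem_maximalIdealOf hr
    obtain ⟨u, hu, v, hv, rfl⟩ := exists_eq_add_X_mul hn s
    have hmul : ∀ m, n ≤ m → ∀ w ∈ canonicalModule k (nSemigroup n),
        X ^ m * w ∈ semigroupAlgebra k (nSemigroup n) := fun m hm w _ => X_pow_mul_mem hm w
    have hr' : r = ⟨X ^ n * u, hmul n le_rfl u hu⟩ + ⟨X ^ (n + 1) * v, hmul _ (by omega) v hv⟩ :=
      Subtype.ext (by rw [hs]; push_cast; ring)
    rw [hr']
    exact add_mem (mul_mem_traceIdeal _ (hmul n le_rfl) hu)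
      (mul_mem_traceIdeal _ (hmul (n + 1) (by omega)) hv)

theorem canonicalModule_sq_eq_top (hn : 3 ≤ n) : canonicalModule k (nSemigroup n) ^ 2 = ⊤ := by
  refine eq_top_iff.2 fun g _ => ?_
  obtain ⟨u, hu, v, hv, rfl⟩ := exists_eq_add_X_mul hn g
  rw [pow_two]
  refine add_mem ?_ (Submodule.mul_mem_mul (X_mem_canonicalModule hn) hv)
  simpa using Submodule.mul_mem_mul hu (one_mem_canonicalModule (by omega))

theorem one_mem_canonicalModule_pow (hn : 2 ≤ n) (m : ℕ) :
    (1 : k⟦X⟧) ∈ canonicalModule k (nSemigroup n) ^ m :=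
  Submodule.one_le.1 (one_le_pow_of_one_le' (Submodule.one_le.2 (one_mem_canonicalModule hn)) m)

theorem bCanonicalSet_eq_maximalIdealOf (hn : 3 ≤ n) :
    bCanonicalSet k (nSemigroup n)
      = (maximalIdealOf k (nSemigroup n) : Set (semigroupAlgebra k (nSemigroup n))) := by
  ext r
  constructor
  · intro hr
    obtain ⟨p, hp, hpX⟩ := hr (HahnSeries.ofPowerSeries ℤ k X)
      ⟨2, fun y _ => ⟨X * y, by rw [canonicalModule_sq_eq_top hn]; trivial, map_mul _ _ _⟩⟩
    rw [← map_mul] at hpX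
    rw [HahnSeries.ofPowerSeries_injective hpX] at hp
    exact mem_maximalIdealOf.2 (coeff_zero_eq_zero_of_mul_X_mem (by omega) hp)
  · rintro hr x ⟨m, hx⟩
    obtain ⟨p, -, hp⟩ := hx 1 (one_mem_canonicalModule_pow (by omega) m)
    rw [map_one, mul_one] at hp
    exact ⟨r * p, mul_mem_of_mem_maximalIdealOf hr p, by rw [map_mul, hp]⟩

end nSemigroup

/-- Let `n ≥ 3`, `H = {0} ∪ {m : m ≥ n}`, and `R = k[[H]]` with maximal
ideal `𝔪_R`. Then (i) the conductor `{r ∈ R : r·k[[t]] ⊆ R}` equals `𝔪_R`;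
(ii) `tr(ω_H) = 𝔪_R`; and (iii) `b(ω_H) = 𝔪_R`. -/
theorem stmt15 (k : Type*) [Field k] (n : ℕ) (hn : 3 ≤ n) :
    {r : ↥(semigroupAlgebra k (nSemigroup n)) |
        ∀ g : PowerSeries k, (r : PowerSeries k) * g ∈ semigroupAlgebra k (nSemigroup n)}
      = (maximalIdealOf k (nSemigroup n) : Set ↥(semigroupAlgebra k (nSemigroup n)))
    ∧ traceIdeal ↥(semigroupAlgebra k (nSemigroup n)) ↥(canonicalModule k (nSemigroup n))
        = maximalIdealOf k (nSemigroup n)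
    ∧ bCanonicalSet k (nSemigroup n)
      = (maximalIdealOf k (nSemigroup n) : Set ↥(semigroupAlgebra k (nSemigroup n))) :=
  ⟨nSemigroup.conductor_eq_maximalIdealOf (by omega), nSemigroup.traceIdeal_canonicalModule hn,
    nSemigroup.bCanonicalSet_eq_maximalIdealOf hn⟩
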